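/- For any x ∈ S(ℤ), the decreasing rearrangement of Dx satisfies the pointwise inequalities (Dx)* ≤ D(o(x)) ≤ σ₂(Dx)*, where o(x) is the sequence of ordering numbers o_n(x) = sup_{k≥n}|x_k| and σ₂ f(t) = f(t/2) is the dilation operator. -/

import Mathlib

open MeasureTheory Real

/-- Ordering number `o_n(x) = sup_{k ≥ n} |x_k|`. -/
noncomputable def ordNum (x : ℤ → ℝ) (n : ℤ) : ℝ :=
  ⨆ k : {k : ℤ // n ≤ k}, |x k.1|

/-- `x ∈ S(ℤ)`: bounded at `+∞`. -/
def memSZ (x : ℤ → ℝ) : Prop :=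
  ∀ n : ℤ, BddAbove (Set.range fun k : {k : ℤ // n ≤ k} => |x k.1|)

/-- Pietsch operator: `Dx = Σ_{n∈ℤ} x_n χ_{[2^n,2^{n+1})}` (and `0` off `(0,∞)`). -/
noncomputable def Dop (x : ℤ → ℝ) (t : ℝ) : ℝ :=
  if 0 < t then x ⌊Real.logb 2 t⌋ else 0

/-- Decreasing rearrangement of a function on `(0,∞)`. -/
noncomputable def rearr (f : ℝ → ℝ) (t : ℝ) : ℝ :=
  sInf {s : ℝ | 0 ≤ s ∧ volume {u : ℝ | 0 < u ∧ s < |f u|} ≤ ENNReal.ofReal t}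

/-- Right shift `(S₊x)_n = x_{n-1}`. -/
def shiftR (x : ℤ → ℝ) : ℤ → ℝ := fun n => x (n - 1)

/-!
On `(0, ∞)` the function `Dx` equals `x_k` on the dyadic block `[2^k, 2^(k+1))`, of measure `2^k`.
Let `2^n ≤ t < 2^(n+1)`, so that `D(o(x))(t) = o_n(x)`. The level set `{|Dx| > o_n(x)}` lies in
`(0, 2^n)`, of measure `≤ t`, whence `(Dx)^*(t) ≤ o_n(x)`. Conversely, for `s < o_n(x)` some
`k ≥ n` has `|x_k| > s`, so `{|Dx| > s}` contains a block of measure `2^k ≥ 2^n > t/2`;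
hence `(Dx)^*(t/2) ≥ o_n(x)`.
-/

open scoped ENNReal

lemma Int.log_two_eq_iff {u : ℝ} (hu : 0 < u) {k : ℤ} :
    Int.log 2 u = k ↔ (2 : ℝ) ^ k ≤ u ∧ u < 2 ^ (k + 1) := by
  have h2 : (1 : ℕ) < 2 := one_lt_two
  rw [← Nat.cast_ofNat (R := ℝ), Int.zpow_le_iff_le_log h2 hu, Int.lt_zpow_iff_log_lt h2 hu]
  omega

noncomputable def distFun (f : ℝ → ℝ) (s : ℝ) : ℝ≥0∞ :=
  volume {u : ℝ | 0 < u ∧ s < |f u|}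

section rearr

variable {f : ℝ → ℝ} {s t c : ℝ}

lemma rearr_le (hs : 0 ≤ s) (h : distFun f s ≤ ENNReal.ofReal t) : rearr f t ≤ s :=
  csInf_le ⟨0, fun _ hr => hr.1⟩ ⟨hs, h⟩

lemma le_rearr (hne : ∃ s, 0 ≤ s ∧ distFun f s ≤ ENNReal.ofReal t)
    (h : ∀ s, 0 ≤ s → distFun f s ≤ ENNReal.ofReal t → c ≤ s) : c ≤ rearr f t :=
  le_csInf hne fun s hs => h s hs.1 hs.2

end rearr

section ordNum

variable {x : ℤ → ℝ} {n k : ℤ} {s : ℝ}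

lemma abs_le_ordNum (hx : memSZ x) (h : n ≤ k) : |x k| ≤ ordNum x n :=
  le_ciSup (hx n) ⟨k, h⟩

lemma ordNum_nonneg (hx : memSZ x) (n : ℤ) : 0 ≤ ordNum x n :=
  (abs_nonneg _).trans (abs_le_ordNum hx le_rfl)

lemma exists_lt_abs_of_lt_ordNum (h : s < ordNum x n) : ∃ k, n ≤ k ∧ s < |x k| := by
  obtain ⟨⟨k, hk⟩, hks⟩ := exists_lt_of_lt_ciSup h
  exact ⟨k, hk, hks⟩

end ordNum

lemma Dop_of_pos (x : ℤ → ℝ) {u : ℝ} (hu : 0 < u) : Dop x u = x (Int.log 2 u) := by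
  rw [Dop, if_pos hu, ← Real.floor_logb_natCast hu.le, Nat.cast_ofNat]

section Dop

variable {x : ℤ → ℝ} {m k : ℤ} {s t : ℝ}

lemma distFun_Dop_le (hx : memSZ x) (hs : ordNum x m ≤ s) :
    distFun (Dop x) s ≤ ENNReal.ofReal (2 ^ m) := by
  have hsub : {u : ℝ | 0 < u ∧ s < |Dop x u|} ⊆ Set.Ioo 0 (2 ^ m) := by
    rintro u ⟨hu, hsu⟩
    refine ⟨hu, lt_of_not_ge fun hmu => hsu.not_ge ?_⟩
    have hm : m ≤ Int.log 2 u := by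
      rw [← Int.zpow_le_iff_le_log one_lt_two hu, Nat.cast_ofNat]; exact hmu
    rw [Dop_of_pos x hu]
    exact (abs_le_ordNum hx hm).trans hs
  refine (measure_mono hsub).trans_eq ?_
  rw [Real.volume_Ioo, sub_zero]

lemma ofReal_le_distFun_Dop (hs : s < |x k|) :
    ENNReal.ofReal (2 ^ k) ≤ distFun (Dop x) s := by
  have hsub : Set.Ico ((2 : ℝ) ^ k) (2 ^ (k + 1)) ⊆ {u : ℝ | 0 < u ∧ s < |Dop x u|} := by
    rintro u hu
    have hu0 : 0 < u := (zpow_pos two_pos k).trans_le hu.1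
    refine ⟨hu0, ?_⟩
    rw [Dop_of_pos x hu0, (Int.log_two_eq_iff hu0).2 hu]
    exact hs
  calc ENNReal.ofReal (2 ^ k) = volume (Set.Ico ((2 : ℝ) ^ k) (2 ^ (k + 1))) := by
        rw [Real.volume_Ico, zpow_add_one₀ two_ne_zero]; ring_nf
    _ ≤ distFun (Dop x) s := measure_mono hsub

lemma exists_distFun_Dop_le (hx : memSZ x) (ht : 0 < t) :
    ∃ s, 0 ≤ s ∧ distFun (Dop x) s ≤ ENNReal.ofReal t := by
  set m := Int.log 2 t
  refine ⟨max (ordNum x m) 0, le_max_right _ _,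
    (distFun_Dop_le hx (le_max_left _ _)).trans (ENNReal.ofReal_le_ofReal ?_)⟩
  exact_mod_cast Int.zpow_log_le_self one_lt_two ht

end Dop

/-- `(Dx)^* ≤ D(o(x)) ≤ σ₂ (Dx)^*` pointwise on `(0,∞)`. -/
theorem rearr_Dop_le_Dop_ordNum_le_dilation (x : ℤ → ℝ) (hx : memSZ x) :
    ∀ t : ℝ, 0 < t →
      rearr (Dop x) t ≤ Dop (ordNum x) t ∧
      Dop (ordNum x) t ≤ rearr (Dop x) (t / 2) := by
  intro t ht
  set n := Int.log 2 t
  have hnt : (2 : ℝ) ^ n ≤ t := by exact_mod_cast Int.zpow_log_le_self one_lt_two ht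
  have htn : t < 2 ^ (n + 1) := by exact_mod_cast Int.lt_zpow_succ_log_self one_lt_two t
  rw [Dop_of_pos _ ht]
  refine ⟨rearr_le (ordNum_nonneg hx n)
    ((distFun_Dop_le hx le_rfl).trans (ENNReal.ofReal_le_ofReal hnt)), ?_⟩
  refine le_rearr (exists_distFun_Dop_le hx (half_pos ht)) fun s _ hst => ?_
  by_contra! hsn
  obtain ⟨k, hnk, hsk⟩ := exists_lt_abs_of_lt_ordNum hsn
  have hkt : (2 : ℝ) ^ k ≤ t / 2 :=
    (ENNReal.ofReal_le_ofReal_iff (half_pos ht).le).1 ((ofReal_le_distFun_Dop hsk).trans hst)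
  have hnk' : (2 : ℝ) ^ n ≤ 2 ^ k := zpow_le_zpow_right₀ one_le_two hnk
  rw [zpow_add_one₀ two_ne_zero] at htn
  linarith
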